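/- Let f̃ : ℝ^d → ℝ be continuously differentiable and ℓ̃-smooth. Then for every x ∈ ℝ^d and every δ > 0, ‖∇f̃_δ(x) − ∇f̃(x)‖² ≤ ℓ̃² δ² d² / 4, where f̃_δ denotes the δ-smoothed function. -/

import Mathlib

/-!
Differentiating under the integral sign, `∇f̃_δ(x)` is the average of `∇f̃(x + δ v)` over the
unit ball, so `‖∇f̃_δ(x) − ∇f̃(x)‖ ≤ ℓ̃ |δ| E‖v‖`. Polar coordinates give `E‖v‖ = d / (d + 1)`
for `v` uniform in the unit ball of `ℝ^d`, and `d / (d + 1) ≤ d / 2`.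
-/

open MeasureTheory Metric

/-- The uniform (normalized Lebesgue) probability measure on the unit ball of `ℝ^d`. -/
noncomputable def ballUniform (d : ℕ) : Measure (EuclideanSpace ℝ (Fin d)) :=
  (volume (ball (0 : EuclideanSpace ℝ (Fin d)) 1))⁻¹ •
    volume.restrict (ball (0 : EuclideanSpace ℝ (Fin d)) 1)

/-- The `δ`-smoothed function `f̃_δ(x) = E_{v̄ ~ Unif(B^d)}[f̃(x + δ v̄)]`. -/
noncomputable def smoothed {d : ℕ} (f : EuclideanSpace ℝ (Fin d) → ℝ) (δ : ℝ)
    (x : EuclideanSpace ℝ (Fin d)) : ℝ :=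
  ∫ v, f (x + δ • v) ∂(ballUniform d)

open Set

theorem setIntegral_norm_ball_addHaar {E : Type*} [NormedAddCommGroup E] [NormedSpace ℝ E]
    [FiniteDimensional ℝ E] [MeasurableSpace E] [BorelSpace E] (μ : Measure E)
    [μ.IsAddHaarMeasure] :
    ∫ x in ball (0 : E) 1, ‖x‖ ∂μ =
      Module.finrank ℝ E / (Module.finrank ℝ E + 1) * μ.real (ball 0 1) := by
  rcases subsingleton_or_nontrivial E with _ | _
  · simp [Module.finrank_zero_of_subsingleton, Subsingleton.elim _ (0 : E)]
  have hball : ∫ x in ball (0 : E) 1, ‖x‖ ∂μ = ∫ x, (Iio 1).indicator id ‖x‖ ∂μ := by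
    rw [← integral_indicator measurableSet_ball]
    congr 1 with x
    simp [indicator]
  have hradial : ∫ y in Ioi (0 : ℝ), y ^ (Module.finrank ℝ E - 1) • (Iio 1).indicator id y =
      ∫ y in (0 : ℝ)..1, y ^ Module.finrank ℝ E := by
    have hpow (y : ℝ) : y ^ (Module.finrank ℝ E - 1) • (Iio 1).indicator id y =
        (Iio 1).indicator (· ^ Module.finrank ℝ E) y := by
      by_cases hy : y < 1
      · simp [hy, ← pow_succ, Nat.sub_add_cancel Module.finrank_pos]
      · simp [hy]
    simp only [hpow, setIntegral_indicator measurableSet_Iio, Ioi_inter_Iio,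
      intervalIntegral.integral_of_le zero_le_one, integral_Ioc_eq_integral_Ioo]
  rw [hball, integral_fun_norm_addHaar, hradial, integral_pow, one_pow,
    zero_pow (Nat.succ_ne_zero _), sub_zero, nsmul_eq_mul, smul_eq_mul]
  field_simp

theorem norm_integral_comp_add_smul_sub_le {E F : Type*} [NormedAddCommGroup E]
    [NormedSpace ℝ E] [MeasurableSpace E] [NormedAddCommGroup F] [NormedSpace ℝ F]
    [CompleteSpace F] (μ : Measure E) [IsProbabilityMeasure μ] {g : E → F} {ℓ δ : ℝ} {x : E}
    (hg : ∀ y, ‖g y - g x‖ ≤ ℓ * ‖y - x‖) (hgμ : Integrable (fun v => g (x + δ • v)) μ)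
    (hμ : Integrable (‖·‖) μ) :
    ‖∫ v, g (x + δ • v) ∂μ - g x‖ ≤ ℓ * |δ| * ∫ v, ‖v‖ ∂μ := by
  have hpointwise (v : E) : ‖g (x + δ • v) - g x‖ ≤ ℓ * |δ| * ‖v‖ := by
    simpa [norm_smul, mul_assoc] using hg (x + δ • v)
  calc ‖∫ v, g (x + δ • v) ∂μ - g x‖ = ‖∫ v, (g (x + δ • v) - g x) ∂μ‖ := by
        rw [integral_sub hgμ (integrable_const _), integral_const, probReal_univ, one_smul]
    _ ≤ ∫ v, ℓ * |δ| * ‖v‖ ∂μ :=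
        norm_integral_le_of_norm_le (hμ.const_mul _) (.of_forall hpointwise)
    _ = ℓ * |δ| * ∫ v, ‖v‖ ∂μ := integral_const_mul _ _

namespace ballUniform

variable {d : ℕ}

instance : IsProbabilityMeasure (ballUniform d) := by
  constructor
  simpa [ballUniform] using
    ENNReal.inv_mul_cancel (measure_ball_pos volume (0 : EuclideanSpace ℝ (Fin d)) one_pos).ne'
      measure_ball_lt_top.ne

theorem ae_mem_ball : ∀ᵐ v ∂(ballUniform d), v ∈ ball 0 1 :=
  Measure.ae_smul_measure (ae_restrict_mem measurableSet_ball) _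

theorem integral_norm : ∫ v, ‖v‖ ∂(ballUniform d) = d / (d + 1) := by
  rw [ballUniform, integral_smul_measure, setIntegral_norm_ball_addHaar,
    finrank_euclideanSpace_fin, ENNReal.toReal_inv, smul_eq_mul, measureReal_def]
  have : (volume (ball (0 : EuclideanSpace ℝ (Fin d)) 1)).toReal ≠ 0 :=
    ENNReal.toReal_ne_zero.2 ⟨(measure_ball_pos volume 0 one_pos).ne', measure_ball_lt_top.ne⟩
  field_simp

end ballUniform

theorem Continuous.integrable_ballUniform {d : ℕ} {F : Type*} [NormedAddCommGroup F]
    {g : EuclideanSpace ℝ (Fin d) → F} (hg : Continuous g) : Integrable g (ballUniform d) :=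
  ((hg.continuousOn.integrableOn_compact (isCompact_closedBall 0 1)).mono_set
    ball_subset_closedBall).smul_measure
      (ENNReal.inv_ne_top.2 (measure_ball_pos volume 0 one_pos).ne')

section Smoothing

variable {d : ℕ} {f : EuclideanSpace ℝ (Fin d) → ℝ}

theorem hasFDerivAt_smoothed (hf : ContDiff ℝ 1 f) (δ : ℝ) (x : EuclideanSpace ℝ (Fin d)) :
    HasFDerivAt (smoothed f δ) (∫ v, fderiv ℝ f (x + δ • v) ∂ballUniform d) x := by
  have hf' : Continuous (fderiv ℝ f) := hf.continuous_fderiv one_ne_zero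
  have hshift (y : EuclideanSpace ℝ (Fin d)) :
      Continuous fun v : EuclideanSpace ℝ (Fin d) => y + δ • v := by
    fun_prop
  obtain ⟨C, hC⟩ :=
    (isCompact_closedBall x (1 + |δ|)).exists_bound_of_continuousOn hf'.continuousOn
  refine hasFDerivAt_integral_of_dominated_of_fderiv_le (F' := fun y v => fderiv ℝ f (y + δ • v))
    (bound := fun _ => C) (ball_mem_nhds x one_pos)
    (.of_forall fun y => (hf.continuous.comp (hshift y)).aestronglyMeasurable)
    (hf.continuous.comp (hshift x)).integrable_ballUniform
    (hf'.comp (hshift x)).aestronglyMeasurable ?_ (integrable_const C)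
    (.of_forall fun v y _ => ?_)
  · filter_upwards [ballUniform.ae_mem_ball] with v hv y hy
    refine hC _ (mem_closedBall_iff_norm.2 ?_)
    calc ‖y + δ • v - x‖ ≤ ‖y - x‖ + ‖δ • v‖ := by
          rw [add_sub_right_comm]; exact norm_add_le _ _
      _ ≤ 1 + |δ| := by
          rw [norm_smul, Real.norm_eq_abs]
          gcongr
          · exact (mem_ball_iff_norm.1 hy).le
          · exact mul_le_of_le_one_right (abs_nonneg δ) (mem_ball_zero_iff.1 hv).le
  · exact (hasFDerivAt_comp_add_right (δ • v)).2 (hf.differentiable one_ne_zero _).hasFDerivAt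

theorem gradient_smoothed (hf : ContDiff ℝ 1 f) (δ : ℝ) (x : EuclideanSpace ℝ (Fin d)) :
    gradient (smoothed f δ) x = ∫ v, gradient f (x + δ • v) ∂ballUniform d := by
  rw [gradient, (hasFDerivAt_smoothed hf δ x).fderiv]
  exact ((InnerProductSpace.toDual ℝ _).symm.toContinuousLinearEquiv.integral_comp_comm _).symm

end Smoothing

theorem smoothing_bias_bound_general
    {d : ℕ} (f : EuclideanSpace ℝ (Fin d) → ℝ) (ℓ : ℝ)
    (hf : ContDiff ℝ 1 f)
    (hsmooth : ∀ x x', ‖gradient f x - gradient f x'‖ ≤ ℓ * ‖x - x'‖)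
    (x : EuclideanSpace ℝ (Fin d)) (δ : ℝ) :
    ‖gradient (smoothed f δ) x - gradient f x‖ ^ 2 ≤ ℓ ^ 2 * δ ^ 2 * (d : ℝ) ^ 2 / 4 := by
  have hgrad : Continuous (gradient f) :=
    (InnerProductSpace.toDual ℝ _).symm.continuous.comp (hf.continuous_fderiv one_ne_zero)
  have hbias : ‖gradient (smoothed f δ) x - gradient f x‖ ≤ ℓ * |δ| * (d / (d + 1)) := by
    rw [gradient_smoothed hf, ← ballUniform.integral_norm]
    exact norm_integral_comp_add_smul_sub_le _ (fun y => hsmooth y x)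
      (by fun_prop : Continuous fun v => gradient f (x + δ • v)).integrable_ballUniform
      continuous_norm.integrable_ballUniform
  have hd : (d : ℝ) / (d + 1) ≤ d / 2 := by
    rcases d.eq_zero_or_pos with rfl | hd
    · simp
    · exact div_le_div_of_nonneg_left d.cast_nonneg two_pos (by norm_cast; omega)
  calc ‖gradient (smoothed f δ) x - gradient f x‖ ^ 2 ≤ (ℓ * |δ| * (d / (d + 1))) ^ 2 := by
        gcongr
    _ = ℓ ^ 2 * δ ^ 2 * (d / (d + 1)) ^ 2 := by rw [mul_pow, mul_pow, sq_abs]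
    _ ≤ ℓ ^ 2 * δ ^ 2 * (d / 2) ^ 2 := by gcongr
    _ = ℓ ^ 2 * δ ^ 2 * (d : ℝ) ^ 2 / 4 := by ring

/-- **Smoothing bias bound.** If `f̃ : ℝ^d → ℝ` is continuously differentiable and
`ℓ̃`-smooth, then for every `x` and every `δ > 0`,
`‖∇f̃_δ(x) − ∇f̃(x)‖² ≤ ℓ̃² δ² d² / 4`. -/
theorem smoothing_bias_bound
    {d : ℕ} (f : EuclideanSpace ℝ (Fin d) → ℝ) (ℓ : ℝ) (hℓ : 0 < ℓ)
    (hf : ContDiff ℝ 1 f)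
    (hsmooth : ∀ x x', ‖gradient f x - gradient f x'‖ ≤ ℓ * ‖x - x'‖)
    (x : EuclideanSpace ℝ (Fin d)) (δ : ℝ) (hδ : 0 < δ) :
    ‖gradient (smoothed f δ) x - gradient f x‖ ^ 2 ≤ ℓ ^ 2 * δ ^ 2 * (d : ℝ) ^ 2 / 4 :=
  smoothing_bias_bound_general f ℓ hf hsmooth x δ
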